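/- Let n ≥ 3 and let L ⊆ {1, …, n}. Work in ℝ[x_1, …, x_n, (y_ℓ)_{ℓ∈L}], with z_ℓ = x_ℓ + y_ℓ for ℓ ∈ L and z_ℓ = x_ℓ otherwise. Consider the n+1 polynomials: e_m(z_1, …, z_n) for m = 1, …, n−1; e_n(z_1, …, z_n) − x_1 x_2 ⋯ x_n; and κ := x_1 x_2 ⋯ x_{n−1}, where e_m denotes the m-th elementary symmetric polynomial in the listed arguments. Then the Jacobian matrix of this family with respect to the n+|L| variables, viewed over the field of rational functions in those variables, has rank n+|L| if and only if |L| ≤ 1. -/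

import Mathlib

open Finset MvPolynomial

noncomputable def esymOn {σ R : Type*} [CommSemiring R] (s : Finset σ) (m : ℕ) (v : σ → R) : R :=
  ∑ t ∈ Finset.powersetCard m s, ∏ i ∈ t, v i

noncomputable def z12 (n : ℕ) (L : Finset (Fin n)) (ℓ : Fin n) :
    MvPolynomial (Fin n ⊕ {i : Fin n // i ∈ L}) ℝ :=
  X (Sum.inl ℓ) + if h : ℓ ∈ L then X (Sum.inr ⟨ℓ, h⟩) else 0

noncomputable def coeffs12 (n : ℕ) (L : Finset (Fin n)) (m : Fin (n + 1)) :
    MvPolynomial (Fin n ⊕ {i : Fin n // i ∈ L}) ℝ :=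
  if m.1 < n - 1 then esymOn Finset.univ (m.1 + 1) (z12 n L)
  else if m.1 = n - 1 then
    esymOn Finset.univ n (z12 n L) - ∏ i : Fin n, X (Sum.inl i)
  else ∏ i ∈ Finset.univ.filter (fun i : Fin n => i.1 < n - 1), X (Sum.inl i)

/-!
Setting every leak rate to zero maps the Jacobian to a matrix over the fraction field of
`ℝ[x₁, …, xₙ]`; a nonvanishing maximal minor there lifts to one of the generic Jacobian.
At `y = 0` the row of `eₙ(z) - x₁⋯xₙ` is `(0, …, 0, ∏_{i ≠ ℓ} xᵢ)`, which kills the leak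
coordinate of a kernel vector `a`. By Vieta, the rows of `e₁, …, e_{n-1}` then say that
`aᵢ ∏_{l ≠ i} (x_l - xᵢ)` is the same number `E = ∑ⱼ (∏_{l ≠ j} x_l) aⱼ` for every `i`, while the
row of `κ` (times `xₙ`) says `E = (∏_{l ≠ n} x_l) aₙ`. As `∏_{l ≠ n} (x_l - xₙ) ≠ ∏_{l ≠ n} x_l`,
this forces `aₙ = 0`, then `E = 0` and `a = 0`. With two leaks there are more parameters than
the `n + 1` coefficients.
-/

section ElementarySymmetric

variable {ι R : Type*}

theorem esymOn_card [CommSemiring R] (s : Finset ι) (f : ι → R) :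
    esymOn s #s f = ∏ i ∈ s, f i := by
  rw [esymOn, powersetCard_self, sum_singleton]

theorem map_esymOn {S : Type*} [CommSemiring R] [CommSemiring S] (φ : R →+* S) (s : Finset ι)
    (m : ℕ) (f : ι → R) : φ (esymOn s m f) = esymOn s m (φ ∘ f) := by
  simp only [esymOn, map_sum, map_prod, Function.comp_apply]

theorem prod_add_eq_sum_esymOn [CommSemiring R] (s : Finset ι) (f : ι → R) (T : R) :
    ∏ i ∈ s, (f i + T) = ∑ j ∈ range (#s + 1), esymOn s j f * T ^ (#s - j) := by
  have h := congrArg (Polynomial.eval T) (s.val.map f).prod_X_add_C_eq_sum_esymm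
  simp only [Polynomial.eval_multiset_prod, Multiset.map_map, Function.comp_def,
    Polynomial.eval_add, Polynomial.eval_X, Polynomial.eval_C, Multiset.card_map,
    Polynomial.eval_finsetSum, Polynomial.eval_mul, Polynomial.eval_pow,
    Finset.esymm_map_val, card_val] at h
  rw [Finset.prod_eq_multiset_prod]
  simpa only [add_comm, esymOn] using h

variable [DecidableEq ι]

theorem sum_powersetCard_filter_mem {M : Type*} [AddCommMonoid M] {s : Finset ι} {i : ι}
    (hi : i ∈ s) (m : ℕ) (g : Finset ι → M) :
    ∑ t ∈ powersetCard (m + 1) s with i ∈ t, g (t.erase i)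
      = ∑ u ∈ powersetCard m (s.erase i), g u := by
  refine sum_nbij' (·.erase i) (insert i) ?_ ?_ ?_ ?_ fun _ _ => rfl
  all_goals intro t ht; simp only [mem_filter, mem_powersetCard] at ht ⊢
  · exact ⟨erase_subset_erase i ht.1.1, by rw [card_erase_of_mem ht.2, ht.1.2]; rfl⟩
  · have hit : i ∉ t := fun h => by simpa using ht.1 h
    exact ⟨⟨insert_subset hi (ht.1.trans (erase_subset i s)),
      by rw [card_insert_of_notMem hit, ht.2]⟩, mem_insert_self i t⟩
  · exact insert_erase ht.2
  · exact erase_insert fun h => by simpa using ht.1 h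

theorem Derivation.leibniz_finset_prod [CommSemiring R] {A : Type*} [CommSemiring A]
    [Algebra R A] (D : Derivation R A A) (s : Finset ι) (f : ι → A) :
    D (∏ i ∈ s, f i) = ∑ i ∈ s, (∏ j ∈ s.erase i, f j) * D (f i) := by
  induction s using Finset.induction_on with
  | empty => simp
  | insert a s ha ih =>
    rw [prod_insert ha, D.leibniz, ih, sum_insert ha, erase_insert ha, smul_eq_mul, smul_eq_mul,
      mul_sum, add_comm]
    congr 1
    refine sum_congr rfl fun i hi => ?_
    rw [erase_insert_of_ne (ne_of_mem_of_not_mem hi ha).symm,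
      prod_insert fun h => ha (mem_of_mem_erase h)]
    ring

theorem Derivation.leibniz_esymOn [CommSemiring R] {A : Type*} [CommSemiring A] [Algebra R A]
    (D : Derivation R A A) (s : Finset ι) (m : ℕ) (f : ι → A) :
    D (esymOn s (m + 1) f) = ∑ i ∈ s, esymOn (s.erase i) m f * D (f i) := by
  simp_rw [esymOn, map_sum, D.leibniz_finset_prod, sum_mul]
  rw [sum_comm' (t' := s) (s' := fun i => {t ∈ powersetCard (m + 1) s | i ∈ t})]
  · exact sum_congr rfl fun i hi => by rw [← sum_powersetCard_filter_mem hi m]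
  · intro t i
    simp only [mem_powersetCard, mem_filter]
    constructor
    · rintro ⟨⟨hts, htc⟩, hit⟩
      exact ⟨⟨⟨hts, htc⟩, hit⟩, hts hit⟩
    · rintro ⟨⟨⟨hts, htc⟩, hit⟩, -⟩
      exact ⟨⟨hts, htc⟩, hit⟩

variable [Fintype ι]

theorem mul_prod_erase_sub_eq_of_sum_esymOn_eq_zero [CommRing R] {w a : ι → R}
    (h : ∀ m < Fintype.card ι - 1, ∑ j, esymOn (univ.erase j) m w * a j = 0) (i : ι) :
    a i * ∏ l ∈ univ.erase i, (w l - w i) = ∑ j, (∏ l ∈ univ.erase j, w l) * a j := by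
  set N := Fintype.card ι - 1
  have hcard : ∀ j : ι, #(univ.erase j) = N := fun j => by
    rw [card_erase_of_mem (mem_univ j), card_univ]
  calc a i * ∏ l ∈ univ.erase i, (w l - w i)
      = ∑ j, a j * ∏ l ∈ univ.erase j, (w l + -w i) := by
        rw [sum_eq_single i (fun j _ hji => ?_) (by simp)]
        · simp_rw [sub_eq_add_neg]
        · rw [prod_eq_zero (mem_erase.2 ⟨hji.symm, mem_univ i⟩) (add_neg_cancel (w i)), mul_zero]
    _ = ∑ m ∈ range (N + 1), (-w i) ^ (N - m) * ∑ j, esymOn (univ.erase j) m w * a j := by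
        simp_rw [prod_add_eq_sum_esymOn, hcard, mul_sum]
        rw [sum_comm]
        exact sum_congr rfl fun j _ => sum_congr rfl fun m _ => by ring
    _ = ∑ j, (∏ l ∈ univ.erase j, w l) * a j := by
        rw [sum_range_succ, sum_eq_zero fun m hm => by rw [h m (mem_range.1 hm), mul_zero],
          zero_add, Nat.sub_self, pow_zero, one_mul]
        exact sum_congr rfl fun j _ => by rw [← hcard j, esymOn_card]

theorem eq_zero_of_sum_esymOn_eq_zero [Field R] {x a : ι → R} (hx : Function.Injective x) (k : ι)
    (hk : ∏ l ∈ univ.erase k, (x l - x k) ≠ ∏ l ∈ univ.erase k, x l)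
    (hlow : ∀ m < Fintype.card ι - 1, ∑ j, esymOn (univ.erase j) m x * a j = 0)
    (hκ : ∑ j ∈ univ.erase k, (∏ i ∈ (univ.erase k).erase j, x i) * a j = 0) : a = 0 := by
  have key := mul_prod_erase_sub_eq_of_sum_esymOn_eq_zero hlow
  have hsum : ∑ j, (∏ l ∈ univ.erase j, x l) * a j = (∏ l ∈ univ.erase k, x l) * a k := by
    rw [← add_sum_erase _ _ (mem_univ k), add_eq_left, ← mul_zero (x k), ← hκ, mul_sum]
    refine sum_congr rfl fun j hj => ?_
    rw [← mul_prod_erase _ _ (mem_erase.2 ⟨(ne_of_mem_erase hj).symm, mem_univ k⟩),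
      erase_right_comm, mul_assoc]
  have hak : a k = 0 := by
    have h := key k
    rw [hsum, mul_comm, ← sub_eq_zero, ← sub_mul] at h
    exact (mul_eq_zero.1 h).resolve_left (sub_ne_zero.2 hk)
  funext i
  have h := key i
  rw [hsum, hak, mul_zero] at h
  refine (mul_eq_zero.1 h).resolve_right ?_
  exact prod_ne_zero_iff.2 fun l hl => sub_ne_zero.2 (hx.ne (ne_of_mem_erase hl))

end ElementarySymmetric

section FractionX

variable (σ R : Type*) [CommRing R] [IsDomain R]

noncomputable abbrev fractionX (i : σ) : FractionRing (MvPolynomial σ R) :=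
  algebraMap (MvPolynomial σ R) _ (X i)

theorem fractionX_injective : Function.Injective (fractionX σ R) :=
  (IsFractionRing.injective _ _).comp X_injective

theorem fractionX_ne_zero (i : σ) : fractionX σ R i ≠ 0 :=
  (map_ne_zero_iff _ (IsFractionRing.injective _ _)).2 (X_ne_zero i)

theorem prod_erase_fractionX_sub_ne [Fintype σ] [DecidableEq σ] {k l₀ : σ} (hl₀ : l₀ ≠ k) :
    ∏ l ∈ univ.erase k, (fractionX σ R l - fractionX σ R k)
      ≠ ∏ l ∈ univ.erase k, fractionX σ R l := by
  simp only [fractionX, ← map_sub, ← map_prod, (IsFractionRing.injective _ _).ne_iff]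
  intro h
  have h1 : ∏ l ∈ univ.erase k, ((Pi.single k 1 : σ → R) l - (Pi.single k 1 : σ → R) k)
      = ∏ l ∈ univ.erase k, (-1 : R) :=
    prod_congr rfl fun l hl => by
      rw [Pi.single_eq_of_ne (ne_of_mem_erase hl), Pi.single_eq_same, zero_sub]
  have h0 : ∏ l ∈ univ.erase k, (Pi.single k 1 : σ → R) l = 0 :=
    prod_eq_zero (mem_erase.2 ⟨hl₀, mem_univ l₀⟩) (Pi.single_eq_of_ne hl₀ _)
  have := congrArg (eval (Pi.single k 1 : σ → R)) h
  simp only [map_prod, map_sub, eval_X, h1, h0, prod_const] at this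
  exact pow_ne_zero _ (neg_ne_zero.2 one_ne_zero) this

end FractionX

theorem Matrix.card_le_rank_map_fractionRing {m ι R K : Type*} [Fintype ι] [DecidableEq ι]
    [CommRing R] [IsDomain R] [CommRing K] (M : Matrix m ι R) (φ : R →+* K) (e : ι → m)
    (h : ((M.submatrix e id).map φ).det ≠ 0) :
    Fintype.card ι ≤ (M.map (algebraMap R (FractionRing R))).rank := by
  have hR : (M.submatrix e id).det ≠ 0 := fun h0 =>
    h (by rw [← RingHom.mapMatrix_apply, ← RingHom.map_det, h0, map_zero])
  have hK : ((M.map (algebraMap R (FractionRing R))).submatrix e id).det ≠ 0 := by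
    rw [Matrix.submatrix_map, ← RingHom.mapMatrix_apply, ← RingHom.map_det]
    exact (map_ne_zero_iff _ (IsFractionRing.injective R _)).2 hR
  calc Fintype.card ι = ((M.map (algebraMap R (FractionRing R))).submatrix e id).rank :=
        (rank_of_isUnit _ ((isUnit_iff_isUnit_det _).2 (isUnit_iff_ne_zero.2 hK))).symm
    _ ≤ _ := rank_submatrix_le _ _ _

section CycleModel

variable {n : ℕ} {L : Finset (Fin n)}

def compartment : Fin n ⊕ {i : Fin n // i ∈ L} → Fin n := Sum.elim id Subtype.val

noncomputable def leakFree (n : ℕ) (L : Finset (Fin n)) :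
    MvPolynomial (Fin n ⊕ {i : Fin n // i ∈ L}) ℝ →+* FractionRing (MvPolynomial (Fin n) ℝ) :=
  eval₂Hom (algebraMap ℝ _) (Sum.elim (fractionX (Fin n) ℝ) 0)

noncomputable def jacobian12 (n : ℕ) (L : Finset (Fin n)) :
    Matrix (Fin (n + 1)) (Fin n ⊕ {i : Fin n // i ∈ L})
      (MvPolynomial (Fin n ⊕ {i : Fin n // i ∈ L}) ℝ) :=
  Matrix.of fun m v => pderiv v (coeffs12 n L m)

def minorRows (n : ℕ) (L : Finset (Fin n)) : Fin n ⊕ {i : Fin n // i ∈ L} → Fin (n + 1) :=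
  Sum.elim (fun j => if j.1 < n - 1 then j.castSucc else Fin.last n) fun _ => ⟨n - 1, by omega⟩

theorem leakFree_X_inl (i : Fin n) : leakFree n L (X (Sum.inl i)) = fractionX (Fin n) ℝ i := by
  simp [leakFree]

theorem leakFree_z12 (ℓ : Fin n) : leakFree n L (z12 n L ℓ) = fractionX (Fin n) ℝ ℓ := by
  unfold z12
  split_ifs <;> simp [leakFree]

theorem pderiv_z12 (c : Fin n ⊕ {i : Fin n // i ∈ L}) (ℓ : Fin n) :
    pderiv c (z12 n L ℓ) = if ℓ = compartment c then 1 else 0 := by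
  classical
  rcases c with j | ⟨u, hu⟩ <;> unfold z12 <;> split_ifs <;>
    simp_all [pderiv_X, compartment]

theorem pderiv_esymOn_z12 (c : Fin n ⊕ {i : Fin n // i ∈ L}) (m : ℕ) :
    pderiv c (esymOn univ (m + 1) (z12 n L))
      = esymOn (univ.erase (compartment c)) m (z12 n L) := by
  simp_rw [(pderiv c).leibniz_esymOn, pderiv_z12, mul_ite, mul_one, mul_zero, sum_ite_eq',
    if_pos (mem_univ _)]

theorem pderiv_prod_X_inl (c : Fin n ⊕ {i : Fin n // i ∈ L}) (s : Finset (Fin n)) :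
    pderiv c (∏ i ∈ s, X (Sum.inl i) : MvPolynomial (Fin n ⊕ {i : Fin n // i ∈ L}) ℝ)
      = Sum.elim (fun j => if j ∈ s then ∏ i ∈ s.erase j, X (Sum.inl i) else 0) 0 c := by
  classical
  rw [(pderiv c).leibniz_finset_prod]
  rcases c with j | u <;> simp [pderiv_X, Pi.single_apply]

theorem leakFree_pderiv_coeffs12_of_lt {m : Fin (n + 1)} (hm : m.1 < n - 1)
    (c : Fin n ⊕ {i : Fin n // i ∈ L}) :
    leakFree n L (pderiv c (coeffs12 n L m))
      = esymOn (univ.erase (compartment c)) m.1 (fractionX (Fin n) ℝ) := by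
  rw [coeffs12, if_pos hm, pderiv_esymOn_z12, map_esymOn]
  exact congrArg _ (funext leakFree_z12)

theorem leakFree_pderiv_coeffs12_of_eq {m : Fin (n + 1)} (hm : m.1 = n - 1)
    (c : Fin n ⊕ {i : Fin n // i ∈ L}) :
    leakFree n L (pderiv c (coeffs12 n L m))
      = Sum.elim (fun _ => 0) (fun u => ∏ i ∈ univ.erase u.1, fractionX (Fin n) ℝ i) c := by
  have hn : n = n - 1 + 1 := by have := (compartment c).pos; omega
  have hcard : ∀ j : Fin n, #(univ.erase j) = n - 1 := fun j => by simp
  rw [coeffs12, if_neg hm.not_lt, if_pos hm, map_sub, map_sub,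
    congrArg (esymOn univ · (z12 n L)) hn, pderiv_esymOn_z12, map_esymOn, ← hcard, esymOn_card,
    pderiv_prod_X_inl]
  rcases c with j | u <;> simp [compartment, leakFree_X_inl, leakFree_z12]

theorem leakFree_pderiv_coeffs12_last {k : Fin n} (hk : k.1 = n - 1)
    (c : Fin n ⊕ {i : Fin n // i ∈ L}) :
    leakFree n L (pderiv c (coeffs12 n L (Fin.last n)))
      = Sum.elim (fun j => if j ∈ univ.erase k then
          ∏ i ∈ (univ.erase k).erase j, fractionX (Fin n) ℝ i else 0) 0 c := by
  have hS : univ.filter (fun i : Fin n => i.1 < n - 1) = univ.erase k := by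
    ext i
    simp only [mem_filter, mem_univ, and_true, true_and, mem_erase, ne_eq, Fin.ext_iff, hk]
    have := i.isLt
    omega
  rw [coeffs12, if_neg (by rw [Fin.val_last]; omega), if_neg (by rw [Fin.val_last]; omega), hS,
    pderiv_prod_X_inl]
  rcases c with j | u
  · simp only [Sum.elim_inl]
    split_ifs <;> simp [leakFree_X_inl]
  · simp

theorem eq_zero_of_leakFree_jacobian12_minor_rows (hn : 2 ≤ n) (hL : #L ≤ 1)
    {v : Fin n ⊕ {i : Fin n // i ∈ L} → FractionRing (MvPolynomial (Fin n) ℝ)}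
    (hrow : ∀ r, ∑ c, leakFree n L (pderiv c (coeffs12 n L (minorRows n L r))) * v c = 0) :
    v = 0 := by
  have hleak : ∀ u, v (Sum.inr u) = 0 := by
    have : Subsingleton {i // i ∈ L} := Finset.card_le_one_iff_subsingleton_coe.1 hL
    intro u
    have h := hrow (Sum.inr u)
    simp only [minorRows, Sum.elim_inr, leakFree_pderiv_coeffs12_of_eq (m := ⟨n - 1, by omega⟩) rfl,
      Fintype.sum_sum_type, Sum.elim_inl, zero_mul, sum_const_zero, zero_add,
      Fintype.sum_subsingleton _ u] at h
    exact (mul_eq_zero.1 h).resolve_left (prod_ne_zero_iff.2 fun i _ => fractionX_ne_zero _ _ i)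
  have ha : v ∘ Sum.inl = 0 := by
    refine eq_zero_of_sum_esymOn_eq_zero (fractionX_injective _ _) ⟨n - 1, by omega⟩
      (prod_erase_fractionX_sub_ne _ _ (l₀ := ⟨0, by omega⟩) (by simp [Fin.ext_iff]; omega))
      (fun m hm => ?_) ?_
    · rw [Fintype.card_fin] at hm
      have h := hrow (Sum.inl ⟨m, by omega⟩)
      simp only [minorRows, Sum.elim_inl, if_pos hm] at h
      simp_rw [leakFree_pderiv_coeffs12_of_lt (m := Fin.castSucc ⟨m, by omega⟩) hm,
        Fintype.sum_sum_type, hleak, mul_zero, sum_const_zero, add_zero] at h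
      exact h
    · have h := hrow (Sum.inl ⟨n - 1, by omega⟩)
      simp only [minorRows, Sum.elim_inl, lt_irrefl, if_false,
        leakFree_pderiv_coeffs12_last (k := ⟨n - 1, by omega⟩) rfl, Fintype.sum_sum_type,
        Sum.elim_inr, Pi.zero_apply, zero_mul, sum_const_zero, add_zero, ite_mul, sum_ite_mem,
        univ_inter] at h
      exact h
  funext c
  rcases c with j | u
  · exact congrFun ha j
  · exact hleak u

theorem det_leakFree_jacobian12_minor_ne_zero (hn : 2 ≤ n) (hL : #L ≤ 1) :
    (((jacobian12 n L).submatrix (minorRows n L) id).map (leakFree n L)).det ≠ 0 := by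
  rw [Ne, ← Matrix.exists_mulVec_eq_zero_iff]
  rintro ⟨v, hv0, hv⟩
  exact hv0 (eq_zero_of_leakFree_jacobian12_minor_rows hn hL fun r => congrFun hv r)

end CycleModel

/-- The cycle model with input in compartment `1`, output in compartment `n`, and leak set
`L` is generically locally identifiable iff `|L| ≤ 1`: the Jacobian of its coefficient map,
viewed over the field of rational functions in the `n + |L|` variables, has full rank
`n + |L|` if and only if `|L| ≤ 1`. -/
theorem stmt12 (n : ℕ) (hn : 3 ≤ n) (L : Finset (Fin n)) :
    (Matrix.of fun (m : Fin (n + 1)) (v : Fin n ⊕ {i : Fin n // i ∈ L}) =>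
        algebraMap (MvPolynomial (Fin n ⊕ {i : Fin n // i ∈ L}) ℝ)
          (FractionRing (MvPolynomial (Fin n ⊕ {i : Fin n // i ∈ L}) ℝ))
          (pderiv v (coeffs12 n L m))).rank = n + L.card ↔ L.card ≤ 1 := by
  set K := FractionRing (MvPolynomial (Fin n ⊕ {i : Fin n // i ∈ L}) ℝ)
  change ((jacobian12 n L).map (algebraMap _ K)).rank = n + #L ↔ #L ≤ 1
  have hwidth : Fintype.card (Fin n ⊕ {i : Fin n // i ∈ L}) = n + #L := by simp
  constructor
  · intro h
    have := ((jacobian12 n L).map (algebraMap _ K)).rank_le_card_height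
    rw [Fintype.card_fin] at this
    omega
  · intro hL
    refine le_antisymm (hwidth ▸ Matrix.rank_le_card_width _) (hwidth ▸ ?_)
    exact (jacobian12 n L).card_le_rank_map_fractionRing (leakFree n L) (minorRows n L)
      (det_leakFree_jacobian12_minor_ne_zero (by omega) hL)
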